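/- Let g be a finite simple Lie algebra of type A_n, B_n, C_n, D_{n+1}, or G_2. If (ν,J) ∈ RC(∞), then (ν,J) ∈ RC(λ_ν); that is, (ν,J) is valid for λ_ν: every rigging x of a string of length i in ν^{(a)} satisfies x ≤ p_i^{(a)}(ν;λ_ν) for all a ∈ I and i > 0. -/

import Mathlib

/-!
Common framework for formalizing "Connecting marginally large tableaux and
rigged configurations via crystals" (Salisbury–Scrimshaw).

Rigged configurations, vacancy numbers, validity, the Kashiwara operators on
rigged configurations, `RC(∞)`, `RC(λ)`, `λ_ν`, `RC^V`, `RC^{EV}` are all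
defined concretely.  The combinatorics of (marginally large / large)
tableaux, Kirillov–Reshetikhin crystals `B^{⊗λ}`, and the
Kerov–Kirillov–Reshetikhin style bijection `Φ` (whose algorithmic definition
via `δ` is far beyond the scope of this file) are packaged abstractly in the
structure `KRSetup`, whose fields record the previously–known properties of
these objects (`Φ` is a shape-preserving bijection between rigged
configurations valid for `λ` and elements of `B^{⊗λ}`, and is a classical
crystal isomorphism).
-/

namespace RCMLT

/-- The five families of finite simple Lie algebras considered in the paper:
`A n` is `A_n`, `B n` is `B_n`, `C n` is `C_n`, `D n` is `D_{n+1}`, and `G` is `G_2`. -/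
inductive GType : Type
  | A (n : ℕ)
  | B (n : ℕ)
  | C (n : ℕ)
  | D (n : ℕ)   -- this stands for `D_{n+1}`
  | G
deriving DecidableEq

/-- The number of nodes of the Dynkin diagram, so that the index set is
`I = Fin (rank g)` (the element `a : Fin (rank g)` represents the node `a+1`
in the paper's indexing). -/
def rank : GType → ℕ
  | .A n => n
  | .B n => n
  | .C n => n
  | .D n => n + 1
  | .G => 2

/-- Entries of the Cartan matrix of a simply laced chain (type `A`). -/
def chainE (a b : ℕ) : ℤ :=
  if a = b then 2 else if a + 1 = b ∨ b + 1 = a then -1 else 0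

/-- The Cartan matrix `A_{ab} = ⟨h_a, α_b⟩` of `g`. -/
def cartan : (g : GType) → Fin (rank g) → Fin (rank g) → ℤ
  | .A _, a, b => chainE a.val b.val
  | .B n, a, b => if a.val = n - 1 ∧ b.val = n - 2 ∧ 2 ≤ n then -2 else chainE a.val b.val
  | .C n, a, b => if a.val = n - 2 ∧ b.val = n - 1 ∧ 2 ≤ n then -2 else chainE a.val b.val
  | .D n, a, b =>
      if ((a.val = n - 2 ∧ b.val = n) ∨ (a.val = n ∧ b.val = n - 2)) ∧ 2 ≤ n then -1
      else if a.val = n ∨ b.val = n then (if a = b then 2 else 0)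
      else chainE a.val b.val
  | .G, a, b => if a = b then 2 else if a.val = 0 then -3 else -1

/-- Integral weights, written in the coordinates of the fundamental weights:
`λ : Wt g` stands for `Σ_a (λ a) Λ_a`, so that `⟨h_a, λ⟩ = λ a`. -/
abbrev Wt (g : GType) := Fin (rank g) → ℤ

/-- A rigged configuration `(ν, J)`: for each node `a`, the multiset of
strings `(i, x)` (a part of length `i` of the partition `ν^{(a)}` together
with its rigging `x`) of `(ν, J)^{(a)}`. -/
abbrev Cfg (g : GType) := Fin (rank g) → Multiset (ℕ × ℤ)

/-- The empty rigged configuration `(ν_∅, J_∅)`. -/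
def emptyCfg (g : GType) : Cfg g := fun _ => 0

/-- The coordinate vector of the fundamental weight `Λ_r`. -/
def fw (g : GType) (r : Fin (rank g)) : Wt g := fun b => if b = r then 1 else 0

/-- `λ` is dominant: all coefficients in the fundamental weights are `≥ 0`. -/
def Dominant (g : GType) (lam : Wt g) : Prop := ∀ a, 0 ≤ lam a

/-- `|ν^{(a)}|`, the number of boxes of the partition recorded by `m`. -/
def psize (m : Multiset (ℕ × ℤ)) : ℤ := (m.map fun s => (s.1 : ℤ)).sum

/-- The vacancy numbers
`p_i^{(a)}(ν; λ) = ⟨h_a, λ⟩ − Σ_{(b,j)} A_{ab} min(i,j) m_j^{(b)}`. -/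
def vac (g : GType) (lam : Wt g) (ν : Cfg g) (a : Fin (rank g)) (i : ℕ) : ℤ :=
  lam a - ∑ b, cartan g a b * ((ν b).map fun s => ((min i s.1 : ℕ) : ℤ)).sum

/-- `(ν, J)` is valid for `λ`: every rigging `x` of a string of length `i` in
`ν^{(a)}` satisfies `x ≤ p_i^{(a)}(ν; λ)`. -/
def Valid (g : GType) (lam : Wt g) (ν : Cfg g) : Prop :=
  ∀ a : Fin (rank g), ∀ s ∈ ν a, s.2 ≤ vac g lam ν a s.1

/-- The Kashiwara lowering operator `f_a` on rigged configurations, as a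
relation: `fRel g a ν ν'` holds iff `f_a (ν, J) = (ν', J')`.  Let `x` be the
smallest rigging in `(ν,J)^{(a)}`.  If `x > 0` (in particular if `ν^{(a)}` is
empty) a string `(1, -1)` is added; otherwise a string `(ℓ, x)` with `ℓ`
maximal is replaced by `(ℓ+1, x-1)`.  All the other riggings are changed so
that all colabels `p_i^{(b)} − x` remain fixed (the colabel differences do
not depend on the weight, so they are computed at weight `0`). -/
def fRel (g : GType) (a : Fin (rank g)) (ν ν' : Cfg g) : Prop :=
  ((∀ s ∈ ν a, 0 < s.2) ∧
     (∀ b, b ≠ a →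
       ν' b = (ν b).map fun s =>
         (s.1, s.2 + vac g (0 : Wt g) ν' b s.1 - vac g (0 : Wt g) ν b s.1)) ∧
     ν' a = (1, -1) ::ₘ ((ν a).map fun s =>
         (s.1, s.2 + vac g (0 : Wt g) ν' a s.1 - vac g (0 : Wt g) ν a s.1))) ∨
  (∃ (l : ℕ) (x : ℤ) (rest : Multiset (ℕ × ℤ)),
     x ≤ 0 ∧ ν a = (l, x) ::ₘ rest ∧
     (∀ s ∈ ν a, x ≤ s.2) ∧ (∀ s ∈ ν a, s.2 = x → s.1 ≤ l) ∧
     (∀ b, b ≠ a →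
       ν' b = (ν b).map fun s =>
         (s.1, s.2 + vac g (0 : Wt g) ν' b s.1 - vac g (0 : Wt g) ν b s.1)) ∧
     ν' a = (l + 1, x - 1) ::ₘ (rest.map fun s =>
         (s.1, s.2 + vac g (0 : Wt g) ν' a s.1 - vac g (0 : Wt g) ν a s.1)))

/-- The Kashiwara raising operator `e_a` on rigged configurations, as a
relation: `eRel g a ν ν'` holds iff `e_a (ν, J) = (ν', J') ≠ 0`.  If the
smallest rigging `x` in `(ν,J)^{(a)}` satisfies `x ≥ 0` then `e_a (ν,J) = 0`
(so no `ν'` is related to `ν`); otherwise a string `(ℓ, x)` with `ℓ` minimal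
is replaced by `(ℓ-1, x+1)` (removed if `ℓ = 1`), and all the other riggings
are changed so that all colabels remain fixed. -/
def eRel (g : GType) (a : Fin (rank g)) (ν ν' : Cfg g) : Prop :=
  ∃ (l : ℕ) (x : ℤ) (rest : Multiset (ℕ × ℤ)),
    x < 0 ∧ ν a = (l, x) ::ₘ rest ∧
    (∀ s ∈ ν a, x ≤ s.2) ∧ (∀ s ∈ ν a, s.2 = x → l ≤ s.1) ∧
    (∀ b, b ≠ a →
      ν' b = (ν b).map fun s =>
        (s.1, s.2 + vac g (0 : Wt g) ν' b s.1 - vac g (0 : Wt g) ν b s.1)) ∧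
    ν' a = (if l = 1 then (0 : Multiset (ℕ × ℤ)) else {(l - 1, x + 1)}) +
      (rest.map fun s =>
        (s.1, s.2 + vac g (0 : Wt g) ν' a s.1 - vac g (0 : Wt g) ν a s.1))

/-- `RC(∞)`: the set of rigged configurations generated from the empty rigged
configuration by the operators `f_a`. -/
inductive RCInf (g : GType) : Cfg g → Prop
  | empty : RCInf g (emptyCfg g)
  | step {a : Fin (rank g)} {ν ν' : Cfg g} : RCInf g ν → fRel g a ν ν' → RCInf g ν'

/-- `RC(λ)`: the closure of the empty rigged configuration under the modified
operators `f_a`, where `f_a (ν, J) = 0` whenever the result is not valid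
for `λ`. -/
inductive RCPoly (g : GType) (lam : Wt g) : Cfg g → Prop
  | empty : RCPoly g lam (emptyCfg g)
  | step {a : Fin (rank g)} {ν ν' : Cfg g} :
      RCPoly g lam ν → fRel g a ν ν' → Valid g lam ν' → RCPoly g lam ν'

/-- The dominant weight `λ_ν`:
`λ_ν = Σ_{a < n} (|ν^{(a)}|+1) Λ_a + λ_ν^{(n)}`, where the last part is
`2(|ν^{(n)}|+1) Λ_n` in type `B_n`,
`(max(|ν^{(n)}|, |ν^{(n+1)}|)+1)(Λ_n + Λ_{n+1})` in type `D_{n+1}`, and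
`(|ν^{(n)}|+1) Λ_n` otherwise. -/
def lambdaNu : (g : GType) → Cfg g → Wt g
  | .A _, ν => fun a => psize (ν a) + 1
  | .B n, ν => fun a => if a.val = n - 1 then 2 * (psize (ν a) + 1) else psize (ν a) + 1
  | .C _, ν => fun a => psize (ν a) + 1
  | .D n, ν => fun a =>
      if a.val = n - 1 ∨ a.val = n then
        max (psize (ν ⟨n - 1, by simp only [rank]; omega⟩))
            (psize (ν ⟨n, by simp only [rank]; omega⟩)) + 1
      else psize (ν a) + 1
  | .G, ν => fun a => psize (ν a) + 1

/-- `(ν, J, λ) ∈ RC^{EV}`: the representative `(ν, J)` lies in `RC(λ)` for a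
dominant weight `λ ≥ λ_ν` (componentwise in the fundamental-weight
coordinates). -/
def RCEV (g : GType) (ν : Cfg g) (lam : Wt g) : Prop :=
  Dominant g lam ∧ RCPoly g lam ν ∧ ∀ a, lambdaNu g ν a ≤ lam a

/-- The coordinates of `wt (ν, J) = −Σ_a |ν^{(a)}| α_a`:
`⟨h_b, wt (ν, J)⟩ = −Σ_a |ν^{(a)}| A_{ba}`. -/
def wtRC (g : GType) (ν : Cfg g) (b : Fin (rank g)) : ℤ :=
  -∑ a, psize (ν a) * cartan g b a

/-- `k`-fold iteration of the raising operator `e_a`. -/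
def eIter (g : GType) (a : Fin (rank g)) : ℕ → Cfg g → Cfg g → Prop
  | 0, ν, ν' => ν' = ν
  | k + 1, ν, ν'' => ∃ ν', eRel g a ν ν' ∧ eIter g a k ν' ν''

/-- `ε_a (ν, J) = max {k ≥ 0 | e_a^k (ν, J) ≠ 0}`. -/
noncomputable def epsRC (g : GType) (a : Fin (rank g)) (ν : Cfg g) : ℕ :=
  sSup {k : ℕ | ∃ μ, eIter g a k ν μ}

/-- `φ_a (ν, J) = ε_a (ν, J) + ⟨h_a, wt (ν, J)⟩`. -/
noncomputable def phiRC (g : GType) (a : Fin (rank g)) (ν : Cfg g) : ℤ :=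
  (epsRC g a ν : ℤ) + wtRC g ν a

/-- An abstract `U_q(g)`-crystal structure on a set `B`: maps
`e_a, f_a : B → B ⊔ {0}`, `ε_a, φ_a : B → ℤ` and `wt : B → P` (in
fundamental-weight coordinates) such that (1) `f_a b = b'` iff `b = e_a b'`;
(2) `wt (f_a b) = wt b − α_a` when `f_a b ≠ 0`; (3) `φ_a − ε_a = ⟨h_a, wt⟩`. -/
structure CrystalStruct (g : GType) (B : Type) where
  e : Fin (rank g) → B → Option B
  f : Fin (rank g) → B → Option B
  wt : B → Wt g
  eps : Fin (rank g) → B → ℤ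
  phi : Fin (rank g) → B → ℤ
  ef_iff : ∀ a b b', f a b = some b' ↔ e a b' = some b
  wt_f : ∀ a b b', f a b = some b' → ∀ c, wt b' c = wt b c - cartan g c a
  phi_eps : ∀ a b, phi a b - eps a b = wt b a

/-- Abstract packaging of the tableaux models (`⊔_{λ} B^{⊗λ}`, the large,
marginally large and semistandard tableaux inside it, basic columns) together
with the bijection `Φ : RC(B^{⊗λ}) → B^{⊗λ}` of
Kerov–Kirillov–Reshetikhin/Okado–Schilling–Shimozono type and its previously
known properties (it is a shape-preserving bijection and a classical crystal
isomorphism), and the marginally large tableaux crystal operators of `T(∞)`. -/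
structure KRSetup (g : GType) where
  /-- elements of `⊔_{λ ∈ P̂⁺} B^{⊗λ}` (tensor products of columns). -/
  Tab : Type
  /-- the weight `λ` with `t ∈ B^{⊗λ}`; for a tableau, its shape. -/
  shape : Tab → Wt g
  /-- the classical crystal operator `f_a` on `B^{⊗λ}`. -/
  ftab : Fin (rank g) → Tab → Option Tab
  /-- the classical crystal operator `e_a` on `B^{⊗λ}`. -/
  etab : Fin (rank g) → Tab → Option Tab
  /-- `t` is (the column reading of) a semistandard tableau. -/
  IsTableau : Tab → Prop
  /-- `t` is a large tableau. -/
  Large : Tab → Prop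
  /-- `t` is a marginally large tableau. -/
  MarginallyLarge : Tab → Prop
  /-- `t` and `t'` differ only by basic columns. -/
  BasicEquiv : Tab → Tab → Prop
  basicEquiv_equiv : Equivalence BasicEquiv
  ml_large : ∀ t, MarginallyLarge t → Large t
  /-- the highest weight tableau `T_λ` (a tensor product of basic columns). -/
  highest : Wt g → Tab
  highest_shape : ∀ lam, shape (highest lam) = lam
  highest_tab : ∀ lam, IsTableau (highest lam)
  /-- insertion of one additional basic column of height `r`. -/
  addBasic : Fin (rank g) → Tab → Tab
  addBasic_shape : ∀ r t, shape (addBasic r t) = shape t + fw g r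
  addBasic_equiv : ∀ r t, BasicEquiv (addBasic r t) t
  /-- the bijection `Φ : RC(B^{⊗λ}) → B^{⊗λ}`. -/
  Phi : Wt g → Cfg g → Tab
  /-- the inverse bijection `Φ⁻¹ : B^{⊗λ} → RC(B^{⊗λ})`. -/
  PhiInv : Wt g → Tab → Cfg g
  phi_shape : ∀ lam ν, Valid g lam ν → shape (Phi lam ν) = lam
  phiInv_valid : ∀ lam t, shape t = lam → Valid g lam (PhiInv lam t)
  phi_left_inv : ∀ lam ν, Valid g lam ν → PhiInv lam (Phi lam ν) = ν
  phi_right_inv : ∀ lam t, shape t = lam → Phi lam (PhiInv lam t) = t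
  /-- `Φ` is a classical crystal isomorphism (Theorem 4.6 of the paper). -/
  phi_f : ∀ lam a ν ν', Valid g lam ν → fRel g a ν ν' → Valid g lam ν' →
      ftab a (Phi lam ν) = some (Phi lam ν')
  phi_f_none : ∀ lam a ν ν', Valid g lam ν → fRel g a ν ν' → ¬ Valid g lam ν' →
      ftab a (Phi lam ν) = none
  phi_e : ∀ lam a ν ν', Valid g lam ν → eRel g a ν ν' →
      etab a (Phi lam ν) = some (Phi lam ν')
  phi_e_none : ∀ lam a ν, Valid g lam ν → ¬(∃ ν', eRel g a ν ν') →
      etab a (Phi lam ν) = none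
  /-- the (total) lowering operator `f_a` of the marginally large tableaux
  model `T(∞)`. -/
  fml : Fin (rank g) → Tab → Tab
  /-- the raising operator `e_a` of the marginally large tableaux model. -/
  eml : Fin (rank g) → Tab → Option Tab
  /-- the weight function of the marginally large tableaux model. -/
  wtml : Tab → Wt g
  epsml : Fin (rank g) → Tab → ℤ
  phiml : Fin (rank g) → Tab → ℤ
  /-- `f_a` on `T(∞)` agrees, up to basic columns, with `f_a` computed on a
  suitable large representative (Lemma 3.2 of Hong–Lee). -/
  fml_spec : ∀ a T, IsTableau T → MarginallyLarge T →
      MarginallyLarge (fml a T) ∧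
      ∃ T₁ T₂, BasicEquiv T₁ T ∧ ftab a T₁ = some T₂ ∧ BasicEquiv T₂ (fml a T)
  eml_spec : ∀ a T T', IsTableau T → MarginallyLarge T → eml a T = some T' →
      MarginallyLarge T' ∧
      ∃ T₁ T₂, BasicEquiv T₁ T ∧ etab a T₁ = some T₂ ∧ BasicEquiv T₂ T'
  phiml_eps : ∀ a T, phiml a T - epsml a T = wtml T a
  wtml_fml : ∀ a T c, wtml (fml a T) c = wtml T c - cartan g c a

/-- The map `Ψ : RC(∞) → T(∞)`: project `(ν, J)` to `RC(λ_ν)`, apply `Φ`,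
and regard the result as a marginally large tableau. -/
def KRSetup.Psi {g : GType} (S : KRSetup g) (ν : Cfg g) : S.Tab :=
  S.Phi (lambdaNu g ν) ν

/-- The map `Ξ : T(∞) → RC(∞)`: project `T` to `T(λ_T)` (where `λ_T` is the
shape of `T`), embed it in `B^{⊗λ_T}` as the tensor product of its columns,
and apply `Φ⁻¹`. -/
def KRSetup.Xi {g : GType} (S : KRSetup g) (T : S.Tab) : Cfg g :=
  S.PhiInv (S.shape T) T

/-- The connected component of `B^{⊗λ}` generated by the highest weight
element `T_λ`, i.e. the embedded copy of `T(λ)`. -/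
inductive TabGen {g : GType} (S : KRSetup g) (lam : Wt g) : S.Tab → Prop
  | base : TabGen S lam (S.highest lam)
  | step {a : Fin (rank g)} {T T' : S.Tab} :
      TabGen S lam T → S.ftab a T = some T' → TabGen S lam T'

/-- An abstract family of highest weight crystals `B(λ)` together with the
natural projections `p : B(λ) → B(μ) ⊔ {0}`, `f_{a_k} ⋯ f_{a_1} u_λ ↦
f_{a_k} ⋯ f_{a_1} u_μ`. -/
structure HWFamily (g : GType) where
  B : Wt g → Type
  crys : ∀ lam, CrystalStruct g (B lam)
  /-- the highest weight element `u_λ`. -/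
  hw : ∀ lam, B lam
  hw_e : ∀ lam a, (crys lam).e a (hw lam) = none
  hw_wt : ∀ lam, (crys lam).wt (hw lam) = lam
  /-- the natural projection `B(λ) → B(μ) ⊔ {0}`. -/
  proj : ∀ lam mu, B lam → Option (B mu)
  proj_hw : ∀ lam mu, proj lam mu (hw lam) = some (hw mu)
  proj_f : ∀ lam mu a b b', (crys lam).f a b = some b' →
      proj lam mu b' = ((proj lam mu b).bind ((crys mu).f a))

/-- An abstract model of `B(∞)` together with a family of highest weight
crystals `B(λ)` and the natural projections `B(∞) → B(λ) ⊔ {0}`. -/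
structure BInfSetup (g : GType) extends HWFamily g where
  Binf : Type
  icrys : CrystalStruct g Binf
  /-- the highest weight element `u_∞`. -/
  uinf : Binf
  uinf_e : ∀ a, icrys.e a uinf = none
  uinf_wt : ∀ b, icrys.wt uinf b = 0
  /-- the natural projection `B(∞) → B(λ) ⊔ {0}`. -/
  projInf : ∀ lam, Binf → Option (B lam)
  projInf_hw : ∀ lam, projInf lam uinf = some (hw lam)
  projInf_f : ∀ lam a b b', icrys.f a b = some b' →
      projInf lam b' = ((projInf lam b).bind ((crys lam).f a))

/-!
Every `(ν, J) ∈ RC(∞)` satisfies the weight-free bound `x ≤ p_j^{(b)}(ν; 0) + j` for each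
string `(j, x)` of `ν^{(b)}`. Since `p_j^{(b)}(ν; λ) = ⟨h_b, λ⟩ + p_j^{(b)}(ν; 0)` and
`j ≤ |ν^{(b)}| < ⟨h_b, λ_ν⟩`, validity for `λ_ν` follows.

The bound is preserved by `f_a`: colabels of the untouched strings are fixed, and the string
`(ℓ, x) ↦ (ℓ + 1, x - 1)` needs `x ≤ p_{ℓ+1}^{(a)}(ν; 0) + ℓ`. The increments of
`i ↦ p_i^{(a)}(ν; 0)` are `-Σ_b A_{ab} #{strings of ν^{(b)} longer than i}`, so this function is
concave between consecutive part lengths of `ν^{(a)}` and nondecreasing beyond the longest part.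
If its increment into `ℓ + 1` is nonnegative it does not drop from the previous part length up
to `ℓ + 1`; otherwise it decreases by at least one per step up to the next part length. Either
way the bound for that neighbouring string, with the minimality of `x` and the maximality of
`ℓ`, gives the claim.
-/

theorem exists_add_le_of_concave_between (V : ℕ → ℤ) (L : Multiset ℕ)
    (hconc : ∀ k k', k ≤ k' → (∀ j ∈ L, k < j → k' < j) →
      V (k' + 1) - V k' ≤ V (k + 1) - V k)
    (hmono : ∀ k, (∀ j ∈ L, j ≤ k) → V k ≤ V (k + 1)) (i : ℕ) :
    V 0 ≤ V (i + 1) ∨ ∃ j ∈ L, V j + j ≤ V (i + 1) + (min (i + 1) j : ℕ) := by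
  classical
  rcases le_or_gt 0 (V (i + 1) - V i) with hup | hdown
  · set J := Nat.findGreatest (· ∈ L) (i + 1)
    have hJle : J ≤ i + 1 := Nat.findGreatest_le _
    have hVJ : V J ≤ V (i + 1) := by
      refine monotoneOn_of_le_add_one Set.ordConnected_Icc (fun k _ ⟨hJk, _⟩ ⟨_, hki⟩ => ?_)
        ⟨le_rfl, hJle⟩ ⟨hJle, le_rfl⟩ hJle
      have hgap : ∀ j ∈ L, k < j → i < j := fun j hj hkj => by
        by_contra! hji
        have := Nat.le_findGreatest (P := (· ∈ L)) (by omega : j ≤ i + 1) hj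
        omega
      linarith [hconc k i (by omega) hgap]
    by_cases hJL : J ∈ L
    · exact Or.inr ⟨J, hJL, by rw [min_eq_right hJle]; linarith⟩
    · have hJ0 : J = 0 := by
        by_contra hJ0
        exact hJL ((Nat.findGreatest_eq_iff.mp rfl).2.1 hJ0)
      exact Or.inl (hJ0 ▸ hVJ)
  · have hlong : ∃ j, j ∈ L ∧ i < j := by
      by_contra! hshort
      linarith [hmono i hshort]
    set q := Nat.find hlong
    obtain ⟨hqL, hiq⟩ : q ∈ L ∧ i < q := Nat.find_spec hlong
    have hW : V q + q ≤ V (i + 1) + (i + 1 : ℕ) := by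
      refine antitoneOn_of_add_one_le (f := fun k => V k + k) Set.ordConnected_Icc
        (fun k _ ⟨hik, _⟩ ⟨_, hkq⟩ => ?_) ⟨le_rfl, hiq⟩ ⟨hiq, le_rfl⟩ hiq
      have hgap : ∀ j ∈ L, i < j → k < j := fun j hj hij => by
        have := Nat.find_min' hlong ⟨hj, hij⟩
        omega
      have := hconc i k (by omega) hgap
      push_cast
      linarith
    exact Or.inr ⟨q, hqL, by rw [min_eq_left hiq]; exact hW⟩

lemma cartan_self (g : GType) (a : Fin (rank g)) : cartan g a a = 2 := by
  have hv : ∀ v : ℕ, chainE v v = 2 := fun v => by simp [chainE]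
  cases g with
  | A n => exact hv _
  | B n => simp only [cartan]; rw [if_neg (by omega)]; exact hv _
  | C n => simp only [cartan]; rw [if_neg (by omega)]; exact hv _
  | D n =>
    simp only [cartan]
    rw [if_neg (by omega)]
    split_ifs
    · rfl
    · exact hv _
  | G => simp [cartan]

lemma cartan_nonpos (g : GType) {a b : Fin (rank g)} (h : a ≠ b) : cartan g a b ≤ 0 := by
  have hv : a.val ≠ b.val := Fin.val_ne_of_ne h
  have hchain : chainE a.val b.val ≤ 0 := by unfold chainE; split_ifs <;> omega
  cases g with
  | A n => exact hchain
  | B n | C n => simp only [cartan]; split_ifs <;> omega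
  | D n => simp only [cartan]; split_ifs <;> omega
  | G => simp only [cartan]; split_ifs <;> omega

lemma sum_cartan_mul_le (g : GType) (b : Fin (rank g)) (t : Fin (rank g) → ℤ)
    (ht : ∀ c, 0 ≤ t c) : ∑ c, cartan g b c * t c ≤ 2 * t b := by
  rw [← Finset.add_sum_erase _ _ (Finset.mem_univ b), cartan_self]
  have : ∑ c ∈ Finset.univ.erase b, cartan g b c * t c ≤ 0 :=
    Finset.sum_nonpos fun c hc =>
      mul_nonpos_of_nonpos_of_nonneg (cartan_nonpos g (Finset.ne_of_mem_erase hc).symm) (ht c)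
  linarith

def minSum (M : Multiset (ℕ × ℤ)) (i : ℕ) : ℤ :=
  (M.map fun s => ((min i s.1 : ℕ) : ℤ)).sum

def countGt (M : Multiset (ℕ × ℤ)) (k : ℕ) : ℤ :=
  (M.filter fun s => k < s.1).card

lemma minSum_zero (M : Multiset (ℕ × ℤ)) : minSum M 0 = 0 := by
  simp [minSum]

lemma minSum_cons (s : ℕ × ℤ) (M : Multiset (ℕ × ℤ)) (i : ℕ) :
    minSum (s ::ₘ M) i = (min i s.1 : ℕ) + minSum M i := by
  simp [minSum]

lemma minSum_map_fst (M : Multiset (ℕ × ℤ)) (F : ℕ × ℤ → ℤ) :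
    minSum (M.map fun s => (s.1, F s)) = minSum M := by
  ext i
  simp [minSum, Multiset.map_map]

lemma minSum_succ (M : Multiset (ℕ × ℤ)) (k : ℕ) :
    minSum M (k + 1) = minSum M k + countGt M k := by
  induction M using Multiset.induction_on with
  | empty => simp [minSum, countGt]
  | cons s M ih =>
    simp only [minSum_cons, ih, countGt, Multiset.filter_cons]
    split_ifs <;> simp <;> omega

lemma countGt_nonneg (M : Multiset (ℕ × ℤ)) (k : ℕ) : 0 ≤ countGt M k := by
  simp [countGt]

lemma countGt_antitone (M : Multiset (ℕ × ℤ)) : Antitone (countGt M) := fun k k' hk => by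
  unfold countGt
  exact_mod_cast Multiset.card_le_card
    (Multiset.monotone_filter_right M fun s (hs : k' < s.1) => (by omega : k < s.1))

lemma vac_eq_sub_sum_minSum (g : GType) (lam : Wt g) (ν : Cfg g) (a : Fin (rank g)) (i : ℕ) :
    vac g lam ν a i = lam a - ∑ b, cartan g a b * minSum (ν b) i := rfl

lemma vac_eq_add_vac_zero (g : GType) (lam : Wt g) (ν : Cfg g) (a : Fin (rank g)) (i : ℕ) :
    vac g lam ν a i = lam a + vac g 0 ν a i := by
  simp only [vac, Pi.zero_apply]
  ring

lemma vac_zero_zero (g : GType) (ν : Cfg g) (b : Fin (rank g)) : vac g 0 ν b 0 = 0 := by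
  simp [vac_eq_sub_sum_minSum, minSum_zero]

lemma vac_zero_succ (g : GType) (ν : Cfg g) (b : Fin (rank g)) (k : ℕ) :
    vac g 0 ν b (k + 1) = vac g 0 ν b k - ∑ c, cartan g b c * countGt (ν c) k := by
  simp only [vac_eq_sub_sum_minSum, minSum_succ, mul_add, Finset.sum_add_distrib]
  ring

lemma vac_zero_sub_of_minSum_eq (g : GType) {ν ν' : Cfg g} {a : Fin (rank g)} {k : ℕ}
    (h : ∀ c, c ≠ a → minSum (ν' c) k = minSum (ν c) k) (b : Fin (rank g)) :
    vac g 0 ν' b k = vac g 0 ν b k - cartan g b a * (minSum (ν' a) k - minSum (ν a) k) := by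
  have hsum : ∑ c, cartan g b c * (minSum (ν' c) k - minSum (ν c) k)
      = cartan g b a * (minSum (ν' a) k - minSum (ν a) k) :=
    Finset.sum_eq_single a (fun c _ hc => by rw [h c hc, sub_self, mul_zero])
      (fun ha => absurd (Finset.mem_univ a) ha)
  simp only [mul_sub, Finset.sum_sub_distrib] at hsum
  simp only [vac_eq_sub_sum_minSum]
  linarith

lemma vac_zero_le_or_exists (g : GType) (ν : Cfg g) (b : Fin (rank g)) (i : ℕ) :
    0 ≤ vac g 0 ν b (i + 1) ∨
      ∃ s ∈ ν b, vac g 0 ν b s.1 + s.1 ≤ vac g 0 ν b (i + 1) + (min (i + 1) s.1 : ℕ) := by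
  have hconc : ∀ k k', k ≤ k' → (∀ j ∈ (ν b).map Prod.fst, k < j → k' < j) →
      vac g 0 ν b (k' + 1) - vac g 0 ν b k' ≤ vac g 0 ν b (k + 1) - vac g 0 ν b k := by
    intro k k' hk hgap
    have hb : countGt (ν b) k = countGt (ν b) k' := by
      unfold countGt
      congr 2
      exact Multiset.filter_congr fun s hs =>
        ⟨hgap s.1 (Multiset.mem_map_of_mem _ hs), fun h => by omega⟩
    have := sum_cartan_mul_le g b (fun c => countGt (ν c) k - countGt (ν c) k')
      fun c => sub_nonneg.mpr (countGt_antitone _ hk)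
    simp only [mul_sub, Finset.sum_sub_distrib, hb, sub_self] at this
    rw [vac_zero_succ, vac_zero_succ]
    linarith
  have hmono : ∀ k, (∀ j ∈ (ν b).map Prod.fst, j ≤ k) →
      vac g 0 ν b k ≤ vac g 0 ν b (k + 1) := by
    intro k hshort
    have hb : countGt (ν b) k = 0 := by
      simp only [countGt, Nat.cast_eq_zero, Multiset.card_eq_zero, Multiset.filter_eq_nil]
      exact fun s hs => not_lt.mpr (hshort s.1 (Multiset.mem_map_of_mem _ hs))
    have := sum_cartan_mul_le g b (fun c => countGt (ν c) k) fun c => countGt_nonneg _ _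
    rw [vac_zero_succ]
    linarith
  simpa [vac_zero_zero] using exists_add_le_of_concave_between _ _ hconc hmono i

lemma le_vac_zero_succ_of_minimal (g : GType) {ν : Cfg g} {a : Fin (rank g)}
    (hν : ∀ s ∈ ν a, s.2 ≤ vac g 0 ν a s.1 + s.1) {l : ℕ} {x : ℤ} (hx : x ≤ 0)
    (hmin : ∀ s ∈ ν a, x ≤ s.2) (hmax : ∀ s ∈ ν a, s.2 = x → s.1 ≤ l) :
    x ≤ vac g 0 ν a (l + 1) + l := by
  rcases vac_zero_le_or_exists g ν a l with hpos | ⟨s, hs, hle⟩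
  · omega
  · have := hν s hs
    by_cases hsl : s.1 ≤ l
    · rw [min_eq_right (by omega)] at hle
      linarith [hmin s hs]
    · have : x < s.2 := lt_of_le_of_ne (hmin s hs) fun h => hsl (hmax s hs h.symm)
      rw [min_eq_left (by omega)] at hle
      push_cast at hle
      linarith

def shiftRiggings (g : GType) (ν ν' : Cfg g) (b : Fin (rank g)) (M : Multiset (ℕ × ℤ)) :
    Multiset (ℕ × ℤ) :=
  M.map fun s => (s.1, s.2 + vac g 0 ν' b s.1 - vac g 0 ν b s.1)

lemma minSum_shiftRiggings (g : GType) (ν ν' : Cfg g) (b : Fin (rank g))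
    (M : Multiset (ℕ × ℤ)) : minSum (shiftRiggings g ν ν' b M) = minSum M :=
  minSum_map_fst M _

lemma le_vac_zero_of_mem_shiftRiggings (g : GType) {ν ν' : Cfg g} {b : Fin (rank g)}
    {M : Multiset (ℕ × ℤ)} (hM : ∀ s ∈ M, s.2 ≤ vac g 0 ν b s.1 + s.1) :
    ∀ s ∈ shiftRiggings g ν ν' b M, s.2 ≤ vac g 0 ν' b s.1 + s.1 := by
  intro s hs
  obtain ⟨t, ht, rfl⟩ := Multiset.mem_map.mp hs
  dsimp only
  linarith [hM t ht]

def RiggingBound (g : GType) (ν : Cfg g) : Prop :=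
  ∀ b, ∀ s ∈ ν b, s.2 ≤ vac g 0 ν b s.1 + s.1

lemma RiggingBound.of_lengthen (g : GType) {ν ν' : Cfg g} {a : Fin (rank g)}
    (hν : RiggingBound g ν) {l : ℕ} {x : ℤ} {rest : Multiset (ℕ × ℤ)} (hx : x ≤ 0)
    (hmin : ∀ s ∈ ν a, x ≤ s.2) (hmax : ∀ s ∈ ν a, s.2 = x → s.1 ≤ l) (hrest : rest ≤ ν a)
    (hlen : ∀ k, minSum (ν a) k = (min k l : ℕ) + minSum rest k)
    (hother : ∀ b, b ≠ a → ν' b = shiftRiggings g ν ν' b (ν b))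
    (ha : ν' a = (l + 1, x - 1) ::ₘ shiftRiggings g ν ν' a rest) :
    RiggingBound g ν' := by
  have hvac : vac g 0 ν' a (l + 1) = vac g 0 ν a (l + 1) - 2 := by
    have hsame : ∀ c, c ≠ a → minSum (ν' c) (l + 1) = minSum (ν c) (l + 1) := fun c hc => by
      rw [hother c hc, minSum_shiftRiggings]
    rw [vac_zero_sub_of_minSum_eq g hsame a,
      cartan_self, ha, minSum_cons, minSum_shiftRiggings, hlen, min_self,
      min_eq_right (Nat.le_succ l)]
    push_cast
    ring
  intro b s hs
  by_cases hb : b = a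
  · subst hb
    rw [ha] at hs
    rcases Multiset.mem_cons.mp hs with rfl | hs
    · have := le_vac_zero_succ_of_minimal g (hν b) hx hmin hmax
      push_cast
      linarith
    · exact le_vac_zero_of_mem_shiftRiggings g
        (fun s hs => hν b s (Multiset.mem_of_le hrest hs)) s hs
  · rw [hother b hb] at hs
    exact le_vac_zero_of_mem_shiftRiggings g (hν b) s hs

lemma RiggingBound.of_fRel (g : GType) {ν ν' : Cfg g} {a : Fin (rank g)}
    (hν : RiggingBound g ν) (hf : fRel g a ν ν') : RiggingBound g ν' := by
  rcases hf with ⟨hpos, hother, ha⟩ | ⟨l, x, rest, hx, hνa, hmin, hmax, hother, ha⟩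
  · -- adding `(1, -1)` is lengthening a phantom string `(0, 0)` below all riggings
    exact hν.of_lengthen g (l := 0) (x := 0) le_rfl (fun s hs => (hpos s hs).le)
      (fun s hs h => absurd h (hpos s hs).ne') le_rfl (fun k => by simp) hother ha
  · exact hν.of_lengthen g hx hmin hmax (hνa ▸ Multiset.le_cons_self _ _)
      (fun k => by rw [hνa, minSum_cons]) hother ha

lemma RCInf.riggingBound {g : GType} {ν : Cfg g} (h : RCInf g ν) : RiggingBound g ν := by
  induction h with
  | empty => simp [RiggingBound, emptyCfg]
  | step _ hf ih => exact ih.of_fRel g hf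

lemma length_le_psize {M : Multiset (ℕ × ℤ)} {s : ℕ × ℤ} (hs : s ∈ M) :
    (s.1 : ℤ) ≤ psize M :=
  Multiset.single_le_sum (by simp; omega) _ (Multiset.mem_map_of_mem _ hs)

lemma psize_nonneg (M : Multiset (ℕ × ℤ)) : 0 ≤ psize M :=
  Multiset.sum_nonneg (by simp; omega)

lemma psize_lt_lambdaNu (g : GType) (ν : Cfg g) (a : Fin (rank g)) :
    psize (ν a) < lambdaNu g ν a := by
  have h0 := psize_nonneg (ν a)
  cases g with
  | B n => simp only [lambdaNu]; split_ifs <;> omega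
  | D n =>
    simp only [lambdaNu]
    split_ifs with ha
    · rcases ha with ha | ha
      · rw [show a = ⟨n - 1, by simp only [rank]; omega⟩ from Fin.ext ha]
        exact Int.lt_add_one_iff.mpr (le_max_left _ _)
      · rw [show a = ⟨n, by simp only [rank]; omega⟩ from Fin.ext ha]
        exact Int.lt_add_one_iff.mpr (le_max_right _ _)
    · omega
  | _ => simp only [lambdaNu]; omega

/-- If `(ν, J) ∈ RC(∞)`, then `(ν, J)` is valid for `λ_ν`:
every rigging `x` of a string of length `i` in `ν^{(a)}` satisfies
`x ≤ p_i^{(a)}(ν; λ_ν)`. -/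
theorem rcinf_valid_lambdaNu (g : GType) (ν : Cfg g) (h : RCInf g ν) :
    Valid g (lambdaNu g ν) ν := by
  intro a s hs
  have hbound := h.riggingBound a s hs
  have hlen := (length_le_psize hs).trans_lt (psize_lt_lambdaNu g ν a)
  rw [vac_eq_add_vac_zero]
  linarith

end RCMLT
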